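/- In the Misra–Gries algorithm with capacity C, every decrement event (triggered when the list would exceed size C) reduces the total of all counters by C+1, hence the number of decrement events after processing N items is at most N/(C+1), and consequently f(u) − A(u) ≤ N/(C+1) for every item u. -/

import Mathlib

/-!
Call `∑ x, A x + (C + 1) * d` the potential of a state `(A, d)`. Every item raises it by exactly
one: a step without decrement adds one to a counter, and a decrement event happens only when
`C + 1` counters are positive, so lowering each of them by one removes `C + 1` from the sum while
`d` grows by one. Hence the potential equals `N` at the end. Each occurrence of `u` either survives
in `A u` or is cancelled by a decrement event, so `f(u) ≤ A(u) + d`.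
-/

/-- One step of Misra–Gries with capacity `C`, also tracking the number of decrement events. -/
def mgStepD {α : Type*} [Fintype α] [DecidableEq α] (C : ℕ) (st : (α → ℕ) × ℕ) (u : α) :
    (α → ℕ) × ℕ :=
  let A' := Function.update st.1 u (st.1 u + 1)
  if (Finset.univ.filter fun x => 0 < A' x).card ≤ C then (A', st.2)
  else (fun x => A' x - 1, st.2 + 1)

open Finset Function

theorem Finset.sum_tsub_one_add_card_filter_pos {ι : Type*} (s : Finset ι) (A : ι → ℕ) :
    ∑ x ∈ s, (A x - 1) + #{x ∈ s | 0 < A x} = ∑ x ∈ s, A x := by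
  rw [card_filter, ← sum_add_distrib]
  refine sum_congr rfl fun x _ => ?_
  split_ifs <;> omega

theorem update_succ_tsub_one_le {α : Type*} [DecidableEq α] (A : α → ℕ) (a x : α) :
    update A a (A a + 1) x - 1 ≤ A x := by
  by_cases h : x = a <;> simp [h]

section MisraGries

variable {α : Type*} [Fintype α] [DecidableEq α]

theorem sum_update_succ (A : α → ℕ) (a : α) :
    ∑ x, update A a (A a + 1) x = ∑ x, A x + 1 := by
  have : update A a (A a + 1) = A + Pi.single a 1 := by
    ext x
    by_cases h : x = a <;> simp [h]
  simp [this, sum_add_distrib]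

theorem card_pos_update_succ_le (A : α → ℕ) (a : α) :
    #{x | 0 < update A a (A a + 1) x} ≤ #{x | 0 < A x} + 1 := by
  refine (card_le_card fun x hx => ?_).trans (card_insert_le a _)
  by_cases h : x = a <;> simp_all

theorem mgStepD_card_pos_le (C : ℕ) (st : (α → ℕ) × ℕ) (a : α)
    (h : #{x | 0 < st.1 x} ≤ C) : #{x | 0 < (mgStepD C st a).1 x} ≤ C := by
  simp only [mgStepD]
  split_ifs with hc
  · exact hc
  · refine (card_le_card fun x hx => ?_).trans h
    simp only [mem_filter, mem_univ, true_and] at hx ⊢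
    exact hx.trans_le (update_succ_tsub_one_le st.1 a x)

theorem mgStepD_potential (C : ℕ) (st : (α → ℕ) × ℕ) (a : α)
    (h : #{x | 0 < st.1 x} ≤ C) :
    ∑ x, (mgStepD C st a).1 x + (C + 1) * (mgStepD C st a).2
      = ∑ x, st.1 x + (C + 1) * st.2 + 1 := by
  have hsum := sum_update_succ st.1 a
  simp only [mgStepD]
  split_ifs with hc
  · simp only [hsum]
    ring
  · have hcard : #{x | 0 < update st.1 a (st.1 a + 1) x} = C + 1 := by
      have := card_pos_update_succ_le st.1 a
      omega
    have hdec := sum_tsub_one_add_card_filter_pos univ (update st.1 a (st.1 a + 1))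
    simp only [hcard, hsum] at hdec
    simp only
    linarith

theorem mgStepD_lower_bound (C : ℕ) (st : (α → ℕ) × ℕ) (a u : α) :
    st.1 u + (if a = u then 1 else 0) + st.2 ≤ (mgStepD C st a).1 u + (mgStepD C st a).2 := by
  have : st.1 u + (if a = u then 1 else 0) = update st.1 a (st.1 a + 1) u := by
    by_cases h : a = u <;> simp [h, Ne.symm]
  rw [this]
  simp only [mgStepD]
  split_ifs <;> simp only <;> omega

theorem foldl_mgStepD_card_pos_le (C : ℕ) (l : List α) (st : (α → ℕ) × ℕ)
    (h : #{x | 0 < st.1 x} ≤ C) : #{x | 0 < (l.foldl (mgStepD C) st).1 x} ≤ C := by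
  induction l generalizing st with
  | nil => exact h
  | cons a l ih => exact ih _ (mgStepD_card_pos_le C st a h)

theorem foldl_mgStepD_potential (C : ℕ) (l : List α) (st : (α → ℕ) × ℕ)
    (h : #{x | 0 < st.1 x} ≤ C) :
    ∑ x, (l.foldl (mgStepD C) st).1 x + (C + 1) * (l.foldl (mgStepD C) st).2
      = ∑ x, st.1 x + (C + 1) * st.2 + l.length := by
  induction l generalizing st with
  | nil => rfl
  | cons a l ih =>
    rw [List.foldl_cons, ih _ (mgStepD_card_pos_le C st a h), mgStepD_potential C st a h,
      List.length_cons]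
    ring

theorem foldl_mgStepD_lower_bound (C : ℕ) (l : List α) (st : (α → ℕ) × ℕ) (u : α) :
    st.1 u + l.count u + st.2 ≤ (l.foldl (mgStepD C) st).1 u + (l.foldl (mgStepD C) st).2 := by
  induction l generalizing st with
  | nil => simp
  | cons a l ih =>
    have hstep := mgStepD_lower_bound C st a u
    have hrest := ih (mgStepD C st a)
    simp only [List.foldl_cons, List.count_cons, beq_iff_eq]
    split_ifs at hstep ⊢ <;> omega

end MisraGries

theorem stmt_11_general {α : Type*} [Fintype α] [DecidableEq α] (C : ℕ)
    (s : List α) :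
    (∑ x : α, (s.foldl (mgStepD C) (fun _ => 0, 0)).1 x)
        + (C + 1) * (s.foldl (mgStepD C) (fun _ => 0, 0)).2 = s.length ∧
    (C + 1) * (s.foldl (mgStepD C) (fun _ => 0, 0)).2 ≤ s.length ∧
    (∀ u : α, s.count u - (s.foldl (mgStepD C) (fun _ => 0, 0)).1 u
        ≤ (s.foldl (mgStepD C) (fun _ => 0, 0)).2) ∧
    (∀ u : α, ((s.count u : ℝ) - (s.foldl (mgStepD C) (fun _ => 0, 0)).1 u)
        ≤ (s.length : ℝ) / (C + 1)) := by
  have hpot := foldl_mgStepD_potential C s (fun _ => 0, 0) (by simp)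
  have hlow := foldl_mgStepD_lower_bound C s (fun _ => 0, 0)
  simp only [sum_const_zero, mul_zero, add_zero, zero_add] at hpot hlow
  set st := s.foldl (mgStepD C) (fun _ => 0, 0)
  have hdec : (C + 1) * st.2 ≤ s.length := by omega
  refine ⟨hpot, hdec, fun u => by have := hlow u; omega, fun u => ?_⟩
  have hcount : (s.count u : ℝ) ≤ st.1 u + st.2 := by exact_mod_cast hlow u
  have hdec' : (st.2 : ℝ) ≤ s.length / (C + 1) := by
    rw [le_div_iff₀ (by positivity)]
    exact_mod_cast (mul_comm _ _).trans_le hdec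
  linarith

/-- Each decrement event reduces the total of all counters by `C+1`, hence the number of
decrement events is at most `N/(C+1)`, and consequently `f(u) − A(u) ≤ N/(C+1)`. -/
theorem stmt_11 {α : Type*} [Fintype α] [DecidableEq α] (C : ℕ) (hC : 0 < C)
    (s : List α) :
    (∑ x : α, (s.foldl (mgStepD C) (fun _ => 0, 0)).1 x)
        + (C + 1) * (s.foldl (mgStepD C) (fun _ => 0, 0)).2 = s.length ∧
    (C + 1) * (s.foldl (mgStepD C) (fun _ => 0, 0)).2 ≤ s.length ∧
    (∀ u : α, s.count u - (s.foldl (mgStepD C) (fun _ => 0, 0)).1 u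
        ≤ (s.foldl (mgStepD C) (fun _ => 0, 0)).2) ∧
    (∀ u : α, ((s.count u : ℝ) - (s.foldl (mgStepD C) (fun _ => 0, 0)).1 u)
        ≤ (s.length : ℝ) / (C + 1)) :=
  stmt_11_general C s
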